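/- Let 𝒜 be an abelian length category and [𝒰, 𝒯] a wide interval with 𝒲 := 𝒰^⊥ ∩ 𝒯. For every torsion class 𝒳 of the abelian category 𝒲, the smallest torsion class of 𝒜 containing 𝒰 ∪ 𝒳 equals 𝒰 * 𝒳, the extension closure in one step: T(𝒰 ∪ 𝒳) = 𝒰 * 𝒳. -/

import Mathlib

open CategoryTheory CategoryTheory.Limits

universe v u

attribute [local instance] CategoryTheory.Abelian.hasFiniteBiproducts

variable (C : Type u) [Category.{v} C] [Abelian C]

/-- The right Hom-perpendicular category of a class of objects. -/
def RPerp (X : Set C) : Set C := {Y | ∀ A ∈ X, ∀ f : A ⟶ Y, f = 0}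

/-- The left Hom-perpendicular category of a class of objects. -/
def LPerp (X : Set C) : Set C := {Y | ∀ A ∈ X, ∀ f : Y ⟶ A, f = 0}

/-- A torsion class: a class of objects containing the zero objects and closed under
quotients and extensions. -/
structure IsTorsionClass (T : Set C) : Prop where
  zero_mem : ∀ Z : C, IsZero Z → Z ∈ T
  quot_mem : ∀ ⦃A B : C⦄ (f : A ⟶ B), Epi f → A ∈ T → B ∈ T
  ext_mem : ∀ E : ShortComplex C, E.ShortExact → E.X₁ ∈ T → E.X₃ ∈ T → E.X₂ ∈ T

/-- A torsion-free class: a class of objects containing the zero objects and closed under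
subobjects and extensions. -/
structure IsTorsionFreeClass (F : Set C) : Prop where
  zero_mem : ∀ Z : C, IsZero Z → Z ∈ F
  sub_mem : ∀ ⦃A B : C⦄ (f : A ⟶ B), Mono f → B ∈ F → A ∈ F
  ext_mem : ∀ E : ShortComplex C, E.ShortExact → E.X₁ ∈ F → E.X₃ ∈ F → E.X₂ ∈ F

/-- The smallest torsion class containing a class of objects. -/
def torsClosure (X : Set C) : Set C := ⋂₀ {T | IsTorsionClass C T ∧ X ⊆ T}

/-- The smallest torsion-free class containing a class of objects. -/
def torfClosure (X : Set C) : Set C := ⋂₀ {F | IsTorsionFreeClass C F ∧ X ⊆ F}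

/-- `ExtStar U W` is the class of objects `X` admitting a short exact sequence
`0 → U' → X → W' → 0` with `U' ∈ U` and `W' ∈ W`. -/
def ExtStar (U W : Set C) : Set C :=
  {X | ∃ E : ShortComplex C, E.ShortExact ∧ E.X₁ ∈ U ∧ E.X₃ ∈ W ∧ Nonempty (E.X₂ ≅ X)}

/-- The additive closure of a class of objects: direct summands of finite direct sums. -/
def AddClosure (S : Set C) : Set C :=
  {X | ∃ (n : ℕ) (c : Fin n → C), (∀ i, c i ∈ S) ∧ ∃ f : (⨁ c) ⟶ X, IsSplitEpi f}

/-- Membership in the filtration closure `Filt S`: objects admitting a finite filtration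
with subquotients in `AddClosure S`. -/
inductive FiltMem (S : Set C) : C → Prop
  | of_isZero (X : C) : IsZero X → FiltMem S X
  | ext (E : ShortComplex C) : E.ShortExact → FiltMem S E.X₁ →
      E.X₃ ∈ AddClosure C S → FiltMem S E.X₂
  | of_iso (X Y : C) (e : X ≅ Y) : FiltMem S X → FiltMem S Y

/-- The filtration closure of a class of objects. -/
def Filt (S : Set C) : Set C := {X | FiltMem C S X}

/-- The class of quotients of objects of the additive closure of `S`. -/
def Fac (S : Set C) : Set C := {X | ∃ A ∈ AddClosure C S, ∃ f : A ⟶ X, Epi f}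

/-- The class of subobjects of objects of the additive closure of `S`. -/
def Subm (S : Set C) : Set C := {X | ∃ A ∈ AddClosure C S, ∃ f : X ⟶ A, Mono f}

/-- A wide subcategory: closed under kernels, cokernels and extensions
(and containing the zero objects). -/
structure IsWide (W : Set C) : Prop where
  zero_mem : ∀ Z : C, IsZero Z → Z ∈ W
  ker_mem : ∀ ⦃X Y : C⦄ (f : X ⟶ Y), X ∈ W → Y ∈ W → kernel f ∈ W
  coker_mem : ∀ ⦃X Y : C⦄ (f : X ⟶ Y), X ∈ W → Y ∈ W → cokernel f ∈ W
  ext_mem : ∀ E : ShortComplex C, E.ShortExact → E.X₁ ∈ W → E.X₃ ∈ W → E.X₂ ∈ W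

/-- A brick: a nonzero object all of whose nonzero endomorphisms are invertible
(equivalently, the endomorphism ring is a division ring). -/
def IsBrick (S : C) : Prop := ¬ IsZero S ∧ ∀ f : S ⟶ S, f = 0 ∨ IsIso f

/-- A simple object of the full abelian subcategory determined by a wide subcategory `W`. -/
def IsSimpleIn (W : Set C) (S : C) : Prop :=
  S ∈ W ∧ ¬ IsZero S ∧ ∀ ⦃A : C⦄ (f : A ⟶ S), A ∈ W → Mono f → IsZero A ∨ IsIso f

/-- A Hasse arrow `T → U` in the poset of torsion classes: `U ⊊ T` are adjacent. -/
def IsHasseArrow (T U : Set C) : Prop :=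
  IsTorsionClass C T ∧ IsTorsionClass C U ∧ U ⊂ T ∧
    ∀ V : Set C, IsTorsionClass C V → U ⊆ V → V ⊆ T → V = U ∨ V = T

/-- A Hasse arrow `F → G` in the poset of torsion-free classes: `G ⊊ F` are adjacent. -/
def IsHasseArrowTorf (F G : Set C) : Prop :=
  IsTorsionFreeClass C F ∧ IsTorsionFreeClass C G ∧ G ⊂ F ∧
    ∀ H : Set C, IsTorsionFreeClass C H → G ⊆ H → H ⊆ F → H = G ∨ H = F

/-- The brick label of a Hasse arrow `T → U` of torsion classes:
the unique brick in `U^⊥ ∩ T`. -/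
def IsBrickLabel (T U : Set C) (S : C) : Prop := IsBrick C S ∧ S ∈ RPerp C U ∩ T

/-- The brick label of a Hasse arrow `F → G` of torsion-free classes:
the unique brick in `^⊥G ∩ F`. -/
def IsBrickLabelTorf (F G : Set C) (S : C) : Prop := IsBrick C S ∧ S ∈ LPerp C G ∩ F

/-- The left wide subcategory of a torsion class. -/
def WL (T : Set C) : Set C :=
  {X | X ∈ T ∧ ∀ ⦃Y : C⦄ (g : Y ⟶ X), Y ∈ T → kernel g ∈ T}

/-- The right wide subcategory of a torsion-free class. -/
def WR (F : Set C) : Set C :=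
  {X | X ∈ F ∧ ∀ ⦃Y : C⦄ (f : X ⟶ Y), Y ∈ F → cokernel f ∈ F}

/-- A Serre subcategory of the abelian category given by a wide subcategory `W`:
closed under extensions, subobjects and quotients within `W`. -/
structure IsSerreIn (W S : Set C) : Prop where
  subset : S ⊆ W
  zero_mem : ∀ Z : C, IsZero Z → Z ∈ S
  sub_mem : ∀ ⦃A X : C⦄ (f : A ⟶ X), Mono f → A ∈ W → X ∈ S → A ∈ S
  quot_mem : ∀ ⦃X B : C⦄ (f : X ⟶ B), Epi f → B ∈ W → X ∈ S → B ∈ S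
  ext_mem : ∀ E : ShortComplex C, E.ShortExact → E.X₂ ∈ W →
    E.X₁ ∈ S → E.X₃ ∈ S → E.X₂ ∈ S

/-- A torsion class of the abelian category given by a wide subcategory `W`:
a subclass of `W` containing the zero objects and closed under quotients in `W`
and extensions. -/
structure IsTorsionClassIn (W X : Set C) : Prop where
  subset : X ⊆ W
  zero_mem : ∀ Z : C, IsZero Z → Z ∈ X
  quot_mem : ∀ ⦃A B : C⦄ (f : A ⟶ B), Epi f → A ∈ X → B ∈ W → B ∈ X
  ext_mem : ∀ E : ShortComplex C, E.ShortExact → E.X₁ ∈ X → E.X₃ ∈ X → E.X₂ ∈ X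

/-! Let `t` be the largest subobject of `M ∈ 𝒯` lying in `𝒰`; then `M / t ∈ 𝒰^⊥ ∩ 𝒯 = 𝒲`, so
`M ∈ 𝒰 * 𝒳` once every quotient of `M` lying in `𝒲` lies in `𝒳`. A quotient in `𝒲` of an
object of `𝒰 * 𝒳` kills its `𝒰`-part, so it is a quotient in `𝒲` of an object of `𝒳`, hence
lies in `𝒳`. This makes `𝒰 * 𝒳` closed under quotients, and under extensions
`0 → A → M → B → 0`: a quotient `Q ∈ 𝒲` of `M` is an extension of `Q / Y` by the image `Y` of
`A`, which are quotients in `𝒲` of `B` and `A` (`Q / Y ∈ 𝒲` because `𝒲` is wide). -/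

open ZeroObject

variable {C}

lemma IsTorsionClass.mem_of_iso {T : Set C} (hT : IsTorsionClass C T) {A B : C} (e : A ≅ B)
    (hA : A ∈ T) : B ∈ T :=
  hT.quot_mem e.hom inferInstance hA

lemma mem_rPerp_of_mono {U : Set C} {A B : C} (f : A ⟶ B) [Mono f] (hB : B ∈ RPerp C U) :
    A ∈ RPerp C U := fun U' hU' g => by
  rw [← cancel_mono f, zero_comp]
  exact hB U' hU' (g ≫ f)

lemma CategoryTheory.ShortComplex.ShortExact.exists_epi_of_comp_eq_zero {E : ShortComplex C}
    (hE : E.ShortExact) {Q : C} (h : E.X₂ ⟶ Q) [Epi h] (hz : E.f ≫ h = 0) :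
    ∃ q : E.X₃ ⟶ Q, Epi q := by
  obtain ⟨q, hq⟩ := Cofork.IsColimit.desc' hE.gIsCokernel h (by rw [hz, zero_comp])
  have : Epi (E.g ≫ q) := by rw [show E.g ≫ q = h from hq]; infer_instance
  exact ⟨q, epi_of_epi E.g q⟩

lemma shortExact_cokernelSequence {A B : C} (f : A ⟶ B) [Mono f] :
    (ShortComplex.cokernelSequence f).ShortExact :=
  .mk' (ShortComplex.cokernelSequence_exact f) ‹_› inferInstance

lemma shortExact_pullback_of_isKernel {Y Q Z I : C} (c : Q ⟶ Z) [Epi c] (ι : I ⟶ Z) [Mono ι]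
    (j : Y ⟶ Q) (w : j ≫ c = 0) (hj : IsLimit (KernelFork.ofι j w)) :
    (ShortComplex.mk (pullback.lift j 0 (by rw [w, zero_comp]) : Y ⟶ pullback c ι)
      (pullback.snd c ι) (pullback.lift_snd _ _ _)).ShortExact := by
  set k : Y ⟶ pullback c ι := pullback.lift j 0 (by rw [w, zero_comp])
  have hkf : k ≫ pullback.fst c ι = j := pullback.lift_fst _ _ _
  have hks : k ≫ pullback.snd c ι = 0 := pullback.lift_snd _ _ _
  have : Mono j := mono_of_isLimit_fork hj
  have : Mono k := by
    have : Mono (k ≫ pullback.fst c ι) := by rw [hkf]; infer_instance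
    exact mono_of_mono k (pullback.fst c ι)
  refine ShortComplex.ShortExact.mk' (ShortComplex.exact_of_f_is_kernel _ ?_) this
    inferInstance
  refine KernelFork.IsLimit.ofι' _ _ (fun {T} s hs => ?_)
  obtain ⟨l, hl⟩ := Fork.IsLimit.lift' hj (s ≫ pullback.fst c ι) (by
    rw [Category.assoc, pullback.condition, ← Category.assoc, hs, zero_comp, comp_zero])
  refine ⟨l, pullback.hom_ext ?_ ?_⟩
  · rw [Category.assoc, hkf]
    exact hl
  · rw [Category.assoc, hks, comp_zero, hs]

lemma exists_subobject_mem_cokernel_mem_rPerp [Noetherian C] {U : Set C}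
    (hU : IsTorsionClass C U) (M : C) :
    ∃ t : Subobject M, (t : C) ∈ U ∧ cokernel t.arrow ∈ RPerp C U := by
  obtain ⟨t, htU, hmax⟩ := WellFounded.has_min (wellFounded_gt (α := Subobject M))
    {P : Subobject M | (P : C) ∈ U}
    ⟨⊥, hU.zero_mem _ (IsZero.of_iso (isZero_zero C) Subobject.botCoeIsoZero)⟩
  refine ⟨t, htU, fun U' hU' f => ?_⟩
  -- the preimage `P` of `image f` in `M` is an extension of `image f` by `t`, so `P = t`
  have himU : image f ∈ U := hU.quot_mem (factorThruImage f) inferInstance hU'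
  have hses := shortExact_pullback_of_isKernel (cokernel.π t.arrow) (image.ι f) t.arrow
    (cokernel.condition _) (Abelian.monoIsKernelOfCokernel _ (colimit.isColimit _))
  set P := Subobject.mk (pullback.fst (cokernel.π t.arrow) (image.ι f))
  have hPU : (P : C) ∈ U :=
    hU.mem_of_iso (Subobject.underlyingIso _).symm (hU.ext_mem _ hses htU himU)
  have htP : t ≤ P := Subobject.le_mk_of_comm
    (pullback.lift t.arrow 0 (by rw [cokernel.condition, zero_comp])) (pullback.lift_fst _ _ _)
  have hPt : P ≤ t := by
    by_contra hPt
    exact hmax P hPU (htP.lt_of_not_ge hPt)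
  have hι : image.ι f = 0 := by
    rw [← cancel_epi (pullback.snd (cokernel.π t.arrow) (image.ι f)), comp_zero,
      ← pullback.condition, ← Subobject.ofMkLE_arrow hPt, Category.assoc, cokernel.condition,
      comp_zero]
  rw [← image.fac f, hι, comp_zero]

section ExtStar

variable {U X : Set C}

lemma mem_extStar_of_mono {A M : C} (f : A ⟶ M) [Mono f] (hA : A ∈ U)
    (hQ : cokernel f ∈ X) : M ∈ ExtStar C U X :=
  ⟨ShortComplex.cokernelSequence f, shortExact_cokernelSequence f, hA, hQ, ⟨Iso.refl M⟩⟩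

lemma subset_extStar_left (hX : ∀ Z : C, IsZero Z → Z ∈ X) : U ⊆ ExtStar C U X :=
  fun A hA => ⟨ShortComplex.mk (𝟙 A) (0 : A ⟶ 0) (by simp),
    (ShortComplex.Splitting.ofIsIsoOfIsZero _ (by dsimp; infer_instance)
      (isZero_zero C)).shortExact,
    hA, hX _ (isZero_zero C), ⟨Iso.refl A⟩⟩

lemma subset_extStar_right (hU : ∀ Z : C, IsZero Z → Z ∈ U) : X ⊆ ExtStar C U X :=
  fun A hA => ⟨ShortComplex.mk (0 : 0 ⟶ A) (𝟙 A) (by simp),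
    (ShortComplex.Splitting.ofIsZeroOfIsIso _ (isZero_zero C)
      (by dsimp; infer_instance)).shortExact,
    hU _ (isZero_zero C), hA, ⟨Iso.refl A⟩⟩

lemma extStar_subset {V : Set C} (hV : IsTorsionClass C V) (hUV : U ⊆ V) (hXV : X ⊆ V) :
    ExtStar C U X ⊆ V := by
  rintro M ⟨E, hE, h₁, h₃, ⟨e⟩⟩
  exact hV.mem_of_iso e (hV.ext_mem E hE (hUV h₁) (hXV h₃))

lemma mem_of_epi_of_mem_extStar {W : Set C} (hX : IsTorsionClassIn C W X) {A Q : C}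
    (hA : A ∈ ExtStar C U X) (f : A ⟶ Q) [Epi f] (hQ : Q ∈ W) (hQU : Q ∈ RPerp C U) :
    Q ∈ X := by
  obtain ⟨E, hE, h₁, h₃, ⟨e⟩⟩ := hA
  obtain ⟨q, hq⟩ := hE.exists_epi_of_comp_eq_zero (e.hom ≫ f) (hQU _ h₁ _)
  exact hX.quot_mem q hq h₃ hQ

end ExtStar

section WideInterval

variable {U T W X : Set C}

lemma mem_extStar_of_forall_epi [Noetherian C] (hU : IsTorsionClass C U)
    (hT : IsTorsionClass C T) (hW : W = RPerp C U ∩ T) {M : C} (hM : M ∈ T)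
    (h : ∀ ⦃Q : C⦄ (π : M ⟶ Q), Epi π → Q ∈ W → Q ∈ X) : M ∈ ExtStar C U X := by
  obtain ⟨t, htU, htU'⟩ := exists_subobject_mem_cokernel_mem_rPerp hU M
  have hQ : cokernel t.arrow ∈ W :=
    hW ▸ ⟨htU', hT.quot_mem (cokernel.π t.arrow) inferInstance hM⟩
  exact mem_extStar_of_mono t.arrow htU (h (cokernel.π t.arrow) (by infer_instance) hQ)

lemma extStar_subset_of_wideInterval (hT : IsTorsionClass C T) (hUT : U ⊆ T)
    (hW : W = RPerp C U ∩ T) (hX : IsTorsionClassIn C W X) : ExtStar C U X ⊆ T :=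
  extStar_subset hT hUT fun _ hA => (hW ▸ hX.subset hA).2

lemma extStar_quot_mem [Noetherian C] (hU : IsTorsionClass C U) (hT : IsTorsionClass C T)
    (hUT : U ⊆ T) (hW : W = RPerp C U ∩ T) (hX : IsTorsionClassIn C W X) {A B : C}
    (f : A ⟶ B) [Epi f] (hA : A ∈ ExtStar C U X) : B ∈ ExtStar C U X := by
  refine mem_extStar_of_forall_epi hU hT hW
    (hT.quot_mem f ‹_› (extStar_subset_of_wideInterval hT hUT hW hX hA)) fun Q π _ hQ => ?_
  exact mem_of_epi_of_mem_extStar hX hA (f ≫ π) hQ (hW ▸ hQ).1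

lemma extStar_ext_mem [Noetherian C] (hU : IsTorsionClass C U) (hT : IsTorsionClass C T)
    (hUT : U ⊆ T) (hW : W = RPerp C U ∩ T) (hX : IsTorsionClassIn C W X) (hwide : IsWide C W)
    (E : ShortComplex C) (hE : E.ShortExact)
    (hA : E.X₁ ∈ ExtStar C U X) (hB : E.X₃ ∈ ExtStar C U X) : E.X₂ ∈ ExtStar C U X := by
  have hET := extStar_subset_of_wideInterval hT hUT hW hX
  refine mem_extStar_of_forall_epi hU hT hW (hT.ext_mem E hE (hET hA) (hET hB))
    fun Q π _ hQ => ?_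
  have hQU : Q ∈ RPerp C U := (hW ▸ hQ).1
  have hYW : image (E.f ≫ π) ∈ W := hW ▸ ⟨mem_rPerp_of_mono (image.ι _) hQU,
    hT.quot_mem (factorThruImage _) inferInstance (hET hA)⟩
  have hYX : image (E.f ≫ π) ∈ X :=
    mem_of_epi_of_mem_extStar hX hA (factorThruImage _) hYW (hW ▸ hYW).1
  have hZW : cokernel (image.ι (E.f ≫ π)) ∈ W := hwide.coker_mem _ hYW hQ
  obtain ⟨q, _⟩ := hE.exists_epi_of_comp_eq_zero (π ≫ cokernel.π (image.ι (E.f ≫ π)))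
    (by rw [← Category.assoc, ← image.fac_assoc (E.f ≫ π), cokernel.condition, comp_zero])
  have hZX : cokernel (image.ι (E.f ≫ π)) ∈ X :=
    mem_of_epi_of_mem_extStar hX hB q hZW (hW ▸ hZW).1
  exact hX.ext_mem _ (shortExact_cokernelSequence _) hYX hZX

lemma isTorsionClass_extStar [Noetherian C] (hU : IsTorsionClass C U)
    (hT : IsTorsionClass C T) (hUT : U ⊆ T) (hW : W = RPerp C U ∩ T)
    (hX : IsTorsionClassIn C W X) (hwide : IsWide C W) : IsTorsionClass C (ExtStar C U X) where
  zero_mem Z hZ := subset_extStar_left hX.zero_mem (hU.zero_mem Z hZ)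
  quot_mem _ _ f _ hA := extStar_quot_mem hU hT hUT hW hX f hA
  ext_mem := extStar_ext_mem hU hT hUT hW hX hwide

end WideInterval

theorem stmt_10_general [Noetherian C]
    (U T : Set C) (hU : IsTorsionClass C U) (hT : IsTorsionClass C T) (hUT : U ⊆ T)
    (W : Set C) (hW : W = RPerp C U ∩ T) (hwide : IsWide C W)
    (X : Set C) (hX : IsTorsionClassIn C W X) :
    torsClosure C (U ∪ X) = ExtStar C U X := by
  refine Set.Subset.antisymm (Set.sInter_subset_of_mem ⟨?_, ?_⟩) ?_
  · exact isTorsionClass_extStar hU hT hUT hW hX hwide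
  · exact Set.union_subset (subset_extStar_left hX.zero_mem) (subset_extStar_right hU.zero_mem)
  · rintro M hM V ⟨hV, hUXV⟩
    exact extStar_subset hV (Set.subset_union_left.trans hUXV)
      (Set.subset_union_right.trans hUXV) hM

/-- For a wide interval `[U,T]` with `W = U^⊥ ∩ T` and any torsion class `X` of `W`,
the smallest torsion class containing `U ∪ X` is `U * X`. -/
theorem stmt_10 [Noetherian C] [Artinian C]
    (U T : Set C) (hU : IsTorsionClass C U) (hT : IsTorsionClass C T) (hUT : U ⊆ T)
    (W : Set C) (hW : W = RPerp C U ∩ T) (hwide : IsWide C W)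
    (X : Set C) (hX : IsTorsionClassIn C W X) :
    torsClosure C (U ∪ X) = ExtStar C U X :=
  stmt_10_general U T hU hT hUT W hW hwide X hX
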